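/- arXiv:1910.04900 — 2 statements merged into one kernel-verified Lean document; each statement's English description precedes it below -/
import Mathlib

section
/- Let μ ≤ 0 and let Z be a Gaussian random variable with mean μ and variance 1. Define the one-sided p-value P = Φ(−Z), where Φ is the standard normal CDF. Then P is uniformly conservative: for all x, τ ∈ [0,1], ℙ(P ≤ x·τ) ≤ x · ℙ(P ≤ τ). -/
/-!
Since `Φ` is strictly increasing, `P ≤ Φ c` iff `-Z ≤ c`, so `ℙ(P ≤ Φ c) = Φ (c + m)`. Writing
`x τ = Φ a ≤ τ = Φ b`, the claim becomes `Φ (a + m) / Φ a ≤ Φ (b + m) / Φ b`: for `m ≤ 0` the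
ratio `q ↦ Φ (q + m) / Φ q` is monotone because the reversed hazard rate `φ / Φ` is antitone
(log-concavity of `Φ`). The latter is the Mills-ratio bound `x Φ x + φ x ≥ 0`, which for `x < 0`
follows from `Φ x ≤ ∫_{t ≤ x} (t / x) φ t = -φ x / x`.
-/

open MeasureTheory ProbabilityTheory

/-- The standard normal CDF `Φ`. -/
noncomputable def stdNormalCDF (x : ℝ) : ℝ :=
  (ProbabilityTheory.gaussianReal 0 1 (Set.Iic x)).toReal

open Real Set Filter Topology

local notation "φ" => gaussianPDFReal 0 1
local notation "Φ" => stdNormalCDF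

lemma gaussianPDFReal_zero_one_apply (x : ℝ) :
    φ x = (√(2 * π))⁻¹ * exp (-(x ^ 2 / 2)) := by
  simp [gaussianPDFReal, neg_div]

lemma hasDerivAt_gaussianPDFReal_zero_one (x : ℝ) : HasDerivAt φ (-x * φ x) x := by
  have hsq : HasDerivAt (fun y : ℝ ↦ -(y ^ 2 / 2)) (-x) x := by
    simpa using ((hasDerivAt_pow 2 x).div_const 2).fun_neg
  rw [funext gaussianPDFReal_zero_one_apply]
  exact (hsq.exp.const_mul _).congr_deriv (by ring)

lemma integrable_mul_gaussianPDFReal_zero_one : Integrable fun t ↦ t * φ t := by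
  refine ((integrable_mul_exp_neg_mul_sq (b := 1 / 2) (by norm_num)).const_mul
    (√(2 * π))⁻¹).congr (Eventually.of_forall fun t ↦ ?_)
  simp only [gaussianPDFReal_zero_one_apply]
  ring_nf

lemma tendsto_gaussianPDFReal_zero_one_atBot : Tendsto φ atBot (𝓝 0) :=
  tendsto_zero_of_hasDerivAt_of_integrableOn_Iic (a := 0)
    (fun x _ ↦ hasDerivAt_gaussianPDFReal_zero_one x)
    (integrable_mul_gaussianPDFReal_zero_one.neg.congr
      (Eventually.of_forall fun t ↦ by simp [neg_mul])).integrableOn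
    (integrable_gaussianPDFReal 0 1).integrableOn

lemma integral_Iic_mul_gaussianPDFReal_zero_one (x : ℝ) :
    ∫ t in Iic x, t * φ t = -φ x := by
  have := integral_Iic_of_hasDerivAt_of_tendsto' (a := x) (f := fun t ↦ -φ t)
    (fun t _ ↦ by simpa using (hasDerivAt_gaussianPDFReal_zero_one t).fun_neg)
    integrable_mul_gaussianPDFReal_zero_one.integrableOn
    (by simpa using tendsto_gaussianPDFReal_zero_one_atBot.neg)
  simpa using this

lemma stdNormalCDF_eq_cdf : Φ = cdf (gaussianReal 0 1) := by
  ext x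
  rw [stdNormalCDF, cdf_eq_real, measureReal_def]

lemma stdNormalCDF_eq_integral (x : ℝ) : Φ x = ∫ t in Iic x, φ t := by
  rw [stdNormalCDF, gaussianReal_apply_eq_integral 0 one_ne_zero, ENNReal.toReal_ofReal]
  exact setIntegral_nonneg measurableSet_Iic fun t _ ↦ gaussianPDFReal_nonneg 0 1 t

lemma hasDerivAt_stdNormalCDF (x : ℝ) : HasDerivAt Φ (φ x) x := by
  have hcont : Continuous φ := by
    rw [funext gaussianPDFReal_zero_one_apply]; fun_prop
  have hΦ : Φ = fun y ↦ Φ 0 + ∫ t in (0 : ℝ)..y, φ t := by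
    ext y
    have hint := (integrable_gaussianPDFReal 0 1).integrableOn (s := Iic y)
    rw [stdNormalCDF_eq_integral, stdNormalCDF_eq_integral,
      ← intervalIntegral.integral_Iic_sub_Iic (integrable_gaussianPDFReal 0 1).integrableOn hint]
    ring
  rw [hΦ]
  exact (intervalIntegral.integral_hasDerivAt_right (hcont.intervalIntegrable 0 x)
    hcont.aestronglyMeasurable.stronglyMeasurableAtFilter hcont.continuousAt).const_add _

lemma stdNormalCDF_strictMono : StrictMono Φ :=
  strictMono_of_hasDerivAt_pos hasDerivAt_stdNormalCDF
    fun x ↦ gaussianPDFReal_pos 0 1 x one_ne_zero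

lemma stdNormalCDF_pos (x : ℝ) : 0 < Φ x :=
  (stdNormalCDF_eq_cdf ▸ cdf_nonneg _ (x - 1)).trans_lt (stdNormalCDF_strictMono (by linarith))

lemma stdNormalCDF_le_one (x : ℝ) : Φ x ≤ 1 :=
  stdNormalCDF_eq_cdf ▸ cdf_le_one _ x

lemma exists_stdNormalCDF_eq {t : ℝ} (h0 : 0 < t) (h1 : t < 1) : ∃ c, Φ c = t := by
  refine mem_range_of_exists_le_of_exists_ge
    (continuous_iff_continuousAt.2 fun x ↦ (hasDerivAt_stdNormalCDF x).continuousAt) ?_ ?_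
  · rw [stdNormalCDF_eq_cdf]
    exact ((tendsto_cdf_atBot _).eventually (eventually_le_nhds h0)).exists
  · rw [stdNormalCDF_eq_cdf]
    exact ((tendsto_cdf_atTop _).eventually (eventually_ge_nhds h1)).exists

lemma mul_stdNormalCDF_add_gaussianPDFReal_nonneg (x : ℝ) : 0 ≤ x * Φ x + φ x := by
  rcases le_or_gt 0 x with hx | hx
  · have := stdNormalCDF_pos x
    have := gaussianPDFReal_pos 0 1 x one_ne_zero
    positivity
  have hΦ : Φ x ≤ ∫ t in Iic x, t / x * φ t := by
    rw [stdNormalCDF_eq_integral]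
    refine setIntegral_mono_on (integrable_gaussianPDFReal 0 1).integrableOn
      ((integrable_mul_gaussianPDFReal_zero_one.div_const x).congr
        (Eventually.of_forall fun t ↦ by ring)).integrableOn measurableSet_Iic fun t ht ↦ ?_
    have : 1 ≤ t / x := (one_le_div_of_neg hx).2 ht
    nlinarith [gaussianPDFReal_pos 0 1 t one_ne_zero]
  have hint : ∫ t in Iic x, t / x * φ t = -φ x / x := by
    simp_rw [div_mul_eq_mul_div]
    rw [integral_div, integral_Iic_mul_gaussianPDFReal_zero_one]
  rw [hint, le_div_iff_of_neg hx] at hΦ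
  linarith

lemma antitone_gaussianPDFReal_div_stdNormalCDF : Antitone fun x ↦ φ x / Φ x := by
  have hderiv (x : ℝ) : HasDerivAt (fun x ↦ φ x / Φ x)
      ((-x * φ x * Φ x - φ x * φ x) / Φ x ^ 2) x :=
    (hasDerivAt_gaussianPDFReal_zero_one x).div (hasDerivAt_stdNormalCDF x)
      (stdNormalCDF_pos x).ne'
  refine antitone_of_hasDerivAt_nonpos hderiv
    fun x ↦ div_nonpos_of_nonpos_of_nonneg ?_ (sq_nonneg _)
  have := mul_nonneg (gaussianPDFReal_nonneg 0 1 x) (mul_stdNormalCDF_add_gaussianPDFReal_nonneg x)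
  linarith

lemma monotone_stdNormalCDF_add_div_stdNormalCDF {m : ℝ} (hm : m ≤ 0) :
    Monotone fun q ↦ Φ (q + m) / Φ q := by
  have hderiv (q : ℝ) : HasDerivAt (fun q ↦ Φ (q + m) / Φ q)
      ((φ (q + m) * Φ q - Φ (q + m) * φ q) / Φ q ^ 2) q :=
    ((hasDerivAt_stdNormalCDF (q + m)).comp_add_const q m).div (hasDerivAt_stdNormalCDF q)
      (stdNormalCDF_pos q).ne'
  refine monotone_of_hasDerivAt_nonneg hderiv fun q ↦ div_nonneg ?_ (sq_nonneg _)
  have := antitone_gaussianPDFReal_div_stdNormalCDF (show q + m ≤ q by linarith)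
  rw [div_le_div_iff₀ (stdNormalCDF_pos q) (stdNormalCDF_pos (q + m))] at this
  linarith

lemma stdNormalCDF_add_le_div_mul {m a b : ℝ} (hm : m ≤ 0) (hab : a ≤ b) :
    Φ (a + m) ≤ Φ a / Φ b * Φ (b + m) := by
  have := monotone_stdNormalCDF_add_div_stdNormalCDF hm hab
  rw [div_le_iff₀ (stdNormalCDF_pos a)] at this
  exact this.trans_eq (by ring)

lemma gaussianReal_Iic (μ c : ℝ) : gaussianReal μ 1 (Iic c) = ENNReal.ofReal (Φ (c - μ)) := by
  rw [stdNormalCDF, ENNReal.ofReal_toReal (measure_ne_top _ _), ← zero_add μ,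
    ← gaussianReal_map_add_const, Measure.map_apply (measurable_add_const μ) measurableSet_Iic,
    preimage_add_const_Iic, zero_add]

lemma measure_stdNormalCDF_neg_le {Ω : Type*} [MeasurableSpace Ω] {μ : Measure Ω}
    {Z : Ω → ℝ} {m : ℝ} (hZ : HasLaw Z (gaussianReal m 1) μ) (c : ℝ) :
    μ {ω | Φ (-Z ω) ≤ Φ c} = ENNReal.ofReal (Φ (c + m)) := by
  simp_rw [stdNormalCDF_strictMono.le_iff_le]
  change μ {ω | (-Z) ω ≤ c} = _
  rw [(gaussianReal_neg hZ).measure_eq (p := (· ≤ c)) measurableSet_Iic, ← sub_neg_eq_add]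
  exact gaussianReal_Iic (-m) c

/-- **Gaussian p-values with nonpositive mean are uniformly conservative.**
If `Z ∼ N(m, 1)` with `m ≤ 0` and `P = Φ(−Z)` is the one-sided p-value, then
`ℙ(P ≤ x·τ) ≤ x · ℙ(P ≤ τ)` for all `x, τ ∈ [0,1]`. -/
theorem gaussian_pvalue_uniformly_conservative
    {Ω : Type*} [MeasurableSpace Ω] (μ : Measure Ω) [IsProbabilityMeasure μ]
    (m : ℝ) (hm : m ≤ 0)
    (Z : Ω → ℝ) (hZmeas : Measurable Z)
    (hZlaw : Measure.map Z μ = ProbabilityTheory.gaussianReal m 1)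
    (P : Ω → ℝ) (hP : ∀ ω, P ω = stdNormalCDF (-(Z ω))) :
    ∀ x ∈ Set.Icc (0 : ℝ) 1, ∀ τ ∈ Set.Icc (0 : ℝ) 1,
      μ {ω | P ω ≤ x * τ} ≤ ENNReal.ofReal x * μ {ω | P ω ≤ τ} := by
  obtain rfl : P = fun ω ↦ Φ (-Z ω) := funext hP
  have hZ : HasLaw Z (gaussianReal m 1) μ := ⟨hZmeas.aemeasurable, hZlaw⟩
  rintro x ⟨hx0, hx1⟩ τ ⟨hτ0, hτ1⟩
  rcases (mul_nonneg hx0 hτ0).eq_or_lt with hxτ | hxτ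
  · simp [← hxτ, (stdNormalCDF_pos _).not_ge]
  rcases hx1.eq_or_lt with rfl | hx1
  · simp
  obtain ⟨a, ha⟩ := exists_stdNormalCDF_eq hxτ (by nlinarith)
  rw [← ha, measure_stdNormalCDF_neg_le hZ]
  rcases hτ1.eq_or_lt with rfl | hτ1
  · simp only [stdNormalCDF_le_one, ofPred_true, measure_univ, mul_one]
    rw [mul_one] at ha
    exact ENNReal.ofReal_le_ofReal (ha ▸ stdNormalCDF_strictMono.monotone (by linarith))
  obtain ⟨b, rfl⟩ := exists_stdNormalCDF_eq (pos_of_mul_pos_right hxτ hx0) hτ1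
  have hab : a ≤ b := by
    rw [← stdNormalCDF_strictMono.le_iff_le, ha]
    nlinarith [stdNormalCDF_pos b]
  rw [measure_stdNormalCDF_neg_le hZ, ← ENNReal.ofReal_mul hx0]
  refine ENNReal.ofReal_le_ofReal ((stdNormalCDF_add_le_div_mul hm hab).trans_eq ?_)
  rw [ha, mul_div_cancel_right₀ _ (stdNormalCDF_pos b).ne']
end

section
/- Let (P_i)_{i≥1} be [0,1]-valued p-values on a probability space and H0 ⊆ ℕ the index set of true nulls. Assume each null p-value P_i (i ∈ H0) is uniformly conservative and is independent of the σ-algebra G_{i−1} = σ(P_1,…,P_{i−1}). Fix α ∈ (0,1) and for each i let α_i, τ_i : Ω → (0,1) be G_{i−1}-measurable with α_i < τ_i almost surely, and assume that almost surely Σ_{i : P_i ≤ τ_i} α_i/τ_i ≤ α. Then the expected number of false discoveries satisfies E[ #{ i ∈ H0 : P_i ≤ α_i } ] ≤ α; in particular ℙ(∃ i ∈ H0 with P_i ≤ α_i) ≤ α. -/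
open MeasureTheory ProbabilityTheory
open scoped ENNReal

/-! A null p-value `P_i` is independent of the levels `(α_i, τ_i)`, which are functions of the
past. Freezing the levels at `(a, t)`, uniform conservativeness gives
`ℙ(P_i ≤ a) ≤ (a / t) ℙ(P_i ≤ t)`, so the probability of rejecting `i` is at most the expected
amount `(α_i / τ_i) 𝟙{P_i ≤ τ_i}` of budget it spends. Summing over the nulls, the expected
number of false rejections is at most the expected total spending, which is at most `α`. -/

/-- The σ-algebra generated by the first `i` p-values `P 0, …, P (i-1)`. -/
def pastFiltration {Ω : Type*} [MeasurableSpace Ω] (P : ℕ → Ω → ℝ) (i : ℕ) :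
    MeasurableSpace Ω :=
  ⨆ j ∈ Finset.range i, MeasurableSpace.comap (P j) inferInstance

section

variable {Ω : Type*} [MeasurableSpace Ω] {μ : Measure Ω}

def UniformlyConservative (μ : Measure Ω) (p : Ω → ℝ) : Prop :=
  ∀ x ∈ Set.Icc (0 : ℝ) 1, ∀ τ ∈ Set.Icc (0 : ℝ) 1,
    μ {ω | p ω ≤ x * τ} ≤ ENNReal.ofReal x * μ {ω | p ω ≤ τ}

theorem UniformlyConservative.measure_le_div_mul {p : Ω → ℝ} (hp : UniformlyConservative μ p)
    {a t : ℝ} (ha : 0 ≤ a) (hat : a ≤ t) (ht : t ≤ 1) :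
    μ {ω | p ω ≤ a} ≤ ENNReal.ofReal (a / t) * μ {ω | p ω ≤ t} := by
  have ht₀ : 0 ≤ t := ha.trans hat
  have hx : a / t ∈ Set.Icc (0 : ℝ) 1 := ⟨div_nonneg ha ht₀, div_le_one_of_le₀ hat ht₀⟩
  have key := hp _ hx t ⟨ht₀, ht⟩
  rwa [div_mul_cancel_of_imp fun h => le_antisymm (h ▸ hat) ha] at key

theorem pastFiltration_le (P : ℕ → Ω → ℝ) (hP : ∀ i, Measurable (P i)) (i : ℕ) :
    pastFiltration P i ≤ ‹MeasurableSpace Ω› :=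
  iSup₂_le fun j _ => (hP j).comap_le

theorem lintegral_ite_le_eq_mul_measure {p : Ω → ℝ} (hp : Measurable p) (c : ℝ) (k : ℝ≥0∞) :
    ∫⁻ ω, (if p ω ≤ c then k else 0) ∂μ = k * μ {ω | p ω ≤ c} := by
  rw [← lintegral_indicator_const (measurableSet_le hp measurable_const)]
  simp only [Set.indicator_apply, Set.mem_ofPred_eq]

theorem ProbabilityTheory.IndepFun.lintegral_comp_eq_lintegral_map [IsFiniteMeasure μ]
    {α β : Type*} [MeasurableSpace α] [MeasurableSpace β] {X : Ω → α} {Y : Ω → β}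
    (hXY : IndepFun X Y μ) (hX : Measurable X) (hY : Measurable Y)
    {f : α × β → ℝ≥0∞} (hf : Measurable f) :
    ∫⁻ ω, f (X ω, Y ω) ∂μ = ∫⁻ y, ∫⁻ ω, f (X ω, y) ∂μ ∂(μ.map Y) := by
  rw [← lintegral_map hf (hX.prodMk hY),
    (indepFun_iff_map_prod_eq_prod_map_map hX.aemeasurable hY.aemeasurable).1 hXY,
    lintegral_prod_symm f hf.aemeasurable]
  exact lintegral_congr fun y => lintegral_map (hf.comp measurable_prodMk_right) hX

theorem UniformlyConservative.measure_le_lintegral_of_indepFun [IsFiniteMeasure μ]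
    {p A T : Ω → ℝ} (hcons : UniformlyConservative μ p)
    (hp : Measurable p) (hA : Measurable A) (hT : Measurable T)
    (hind : IndepFun p (fun ω => (A ω, T ω)) μ)
    (hrange : ∀ᵐ ω ∂μ, 0 ≤ A ω ∧ A ω ≤ T ω ∧ T ω ≤ 1) :
    μ {ω | p ω ≤ A ω}
      ≤ ∫⁻ ω, ENNReal.ofReal (if p ω ≤ T ω then A ω / T ω else 0) ∂μ := by
  have hY : Measurable fun ω => (A ω, T ω) := hA.prodMk hT
  have hrej : Measurable fun z : ℝ × ℝ × ℝ => if z.1 ≤ z.2.1 then (1 : ℝ≥0∞) else 0 :=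
    Measurable.ite (measurableSet_le measurable_fst measurable_snd.fst) measurable_const
      measurable_const
  have hspend : Measurable fun z : ℝ × ℝ × ℝ =>
      ENNReal.ofReal (if z.1 ≤ z.2.2 then z.2.1 / z.2.2 else 0) :=
    ENNReal.measurable_ofReal.comp <| Measurable.ite
      (measurableSet_le measurable_fst measurable_snd.snd)
      (measurable_snd.fst.div measurable_snd.snd) measurable_const
  have hrange' : ∀ᵐ y ∂μ.map (fun ω => (A ω, T ω)), 0 ≤ y.1 ∧ y.1 ≤ y.2 ∧ y.2 ≤ 1 :=
    (ae_map_iff hY.aemeasurable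
      ((measurableSet_le measurable_const measurable_fst).inter
        ((measurableSet_le measurable_fst measurable_snd).inter
          (measurableSet_le measurable_snd measurable_const)))).2 hrange
  calc μ {ω | p ω ≤ A ω}
      = ∫⁻ ω, (if p ω ≤ A ω then 1 else 0) ∂μ := by
        rw [← lintegral_indicator_one (measurableSet_le hp hA)]
        simp only [Set.indicator_apply, Set.mem_ofPred_eq, Pi.one_apply]
    _ = ∫⁻ y, μ {ω | p ω ≤ y.1} ∂μ.map (fun ω => (A ω, T ω)) := by
        rw [hind.lintegral_comp_eq_lintegral_map hp hY hrej]
        simp only [lintegral_ite_le_eq_mul_measure hp, one_mul]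
    _ ≤ ∫⁻ y, ENNReal.ofReal (y.1 / y.2) * μ {ω | p ω ≤ y.2} ∂μ.map (fun ω => (A ω, T ω)) :=
        lintegral_mono_ae <| hrange'.mono fun _ ⟨ha, hat, ht⟩ => hcons.measure_le_div_mul ha hat ht
    _ = ∫⁻ ω, ENNReal.ofReal (if p ω ≤ T ω then A ω / T ω else 0) ∂μ := by
        rw [hind.lintegral_comp_eq_lintegral_map hp hY hspend]
        simp only [apply_ite ENNReal.ofReal, ENNReal.ofReal_zero,
          lintegral_ite_le_eq_mul_measure hp]

end

theorem discard_spending_pfer_control_general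
    {Ω : Type*} [MeasurableSpace Ω] (μ : Measure Ω) [IsProbabilityMeasure μ]
    (P : ℕ → Ω → ℝ) (hPmeas : ∀ i, Measurable (P i))
    (H0 : Set ℕ)
    (hconserv : ∀ i ∈ H0, ∀ x ∈ Set.Icc (0 : ℝ) 1, ∀ τ ∈ Set.Icc (0 : ℝ) 1,
      μ {ω | P i ω ≤ x * τ} ≤ ENNReal.ofReal x * μ {ω | P i ω ≤ τ})
    (hindep : ∀ i ∈ H0,
      Indep (MeasurableSpace.comap (P i) inferInstance) (pastFiltration P i) μ)
    (α : ℝ)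
    (alev τlev : ℕ → Ω → ℝ)
    (halev_meas : ∀ i, Measurable[pastFiltration P i] (alev i))
    (hτlev_meas : ∀ i, Measurable[pastFiltration P i] (τlev i))
    (halev_range : ∀ i ω, alev i ω ∈ Set.Ioo (0 : ℝ) 1)
    (hτlev_range : ∀ i ω, τlev i ω ∈ Set.Ioo (0 : ℝ) 1)
    (h_lt : ∀ i, ∀ᵐ ω ∂μ, alev i ω < τlev i ω)
    (hbudget : ∀ᵐ ω ∂μ,
      ∑' i, ENNReal.ofReal (if P i ω ≤ τlev i ω then alev i ω / τlev i ω else 0)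
        ≤ ENNReal.ofReal α) :
    (∫⁻ ω, ∑' i : H0, Set.indicator {ω' | P i ω' ≤ alev i ω'} (fun _ => (1 : ℝ≥0∞)) ω ∂μ)
        ≤ ENNReal.ofReal α ∧
      μ {ω | ∃ i ∈ H0, P i ω ≤ alev i ω} ≤ ENNReal.ofReal α := by
  set spend : ℕ → Ω → ℝ≥0∞ :=
    fun i ω => ENNReal.ofReal (if P i ω ≤ τlev i ω then alev i ω / τlev i ω else 0)
  have hA i : Measurable (alev i) := (halev_meas i).mono (pastFiltration_le P hPmeas i) le_rfl
  have hT i : Measurable (τlev i) := (hτlev_meas i).mono (pastFiltration_le P hPmeas i) le_rfl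
  have hrej i : MeasurableSet {ω | P i ω ≤ alev i ω} := measurableSet_le (hPmeas i) (hA i)
  have hspend i : Measurable (spend i) := ENNReal.measurable_ofReal.comp <|
    Measurable.ite (measurableSet_le (hPmeas i) (hT i)) ((hA i).div (hT i)) measurable_const
  have hnull : ∀ i ∈ H0, μ {ω | P i ω ≤ alev i ω} ≤ ∫⁻ ω, spend i ω ∂μ := fun i hi =>
    UniformlyConservative.measure_le_lintegral_of_indepFun (hconserv i hi) (hPmeas i) (hA i) (hT i)
      (indep_of_indep_of_le_right (hindep i hi)
        ((halev_meas i).prodMk (hτlev_meas i)).comap_le)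
      ((h_lt i).mono fun ω h => ⟨(halev_range i ω).1.le, h.le, (hτlev_range i ω).2.le⟩)
  have hPFER : ∑' i : H0, μ {ω | P i ω ≤ alev i ω} ≤ ENNReal.ofReal α :=
    calc ∑' i : H0, μ {ω | P i ω ≤ alev i ω}
        ≤ ∑' i : H0, ∫⁻ ω, spend i ω ∂μ := ENNReal.tsum_le_tsum fun i => hnull i i.2
      _ ≤ ∑' i, ∫⁻ ω, spend i ω ∂μ :=
        ENNReal.tsum_comp_le_tsum_of_injective Subtype.val_injective _
      _ = ∫⁻ ω, ∑' i, spend i ω ∂μ := (lintegral_tsum fun i => (hspend i).aemeasurable).symm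
      _ ≤ ∫⁻ _, ENNReal.ofReal α ∂μ := lintegral_mono_ae hbudget
      _ = ENNReal.ofReal α := by simp
  constructor
  · rw [lintegral_tsum fun i : H0 => (measurable_const.indicator (hrej i)).aemeasurable]
    simpa only [lintegral_indicator_const (hrej _), one_mul] using hPFER
  · calc μ {ω | ∃ i ∈ H0, P i ω ≤ alev i ω} = μ (⋃ i : H0, {ω | P i ω ≤ alev i ω}) := by
          simp only [Set.iUnion_ofPred, Subtype.exists, exists_prop]
      _ ≤ ∑' i : H0, μ {ω | P i ω ≤ alev i ω} := measure_iUnion_le _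
      _ ≤ ENNReal.ofReal α := hPFER

/-- **Discard-Spending controls PFER (and hence FWER).** If each null p-value is uniformly
conservative and independent of the past, the levels `α_i, τ_i` are predictable, `(0,1)`-valued
with `α_i < τ_i` a.s., and a.s. `∑_{i : P_i ≤ τ_i} α_i/τ_i ≤ α`, then the expected number of
false discoveries is at most `α`; in particular the FWER is at most `α`. -/
theorem discard_spending_pfer_control
    {Ω : Type*} [MeasurableSpace Ω] (μ : Measure Ω) [IsProbabilityMeasure μ]
    (P : ℕ → Ω → ℝ) (hPmeas : ∀ i, Measurable (P i))
    (hPrange : ∀ i ω, P i ω ∈ Set.Icc (0 : ℝ) 1)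
    (H0 : Set ℕ)
    (hconserv : ∀ i ∈ H0, ∀ x ∈ Set.Icc (0 : ℝ) 1, ∀ τ ∈ Set.Icc (0 : ℝ) 1,
      μ {ω | P i ω ≤ x * τ} ≤ ENNReal.ofReal x * μ {ω | P i ω ≤ τ})
    (hindep : ∀ i ∈ H0,
      Indep (MeasurableSpace.comap (P i) inferInstance) (pastFiltration P i) μ)
    (α : ℝ) (hα : α ∈ Set.Ioo (0 : ℝ) 1)
    (alev τlev : ℕ → Ω → ℝ)
    (halev_meas : ∀ i, Measurable[pastFiltration P i] (alev i))
    (hτlev_meas : ∀ i, Measurable[pastFiltration P i] (τlev i))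
    (halev_range : ∀ i ω, alev i ω ∈ Set.Ioo (0 : ℝ) 1)
    (hτlev_range : ∀ i ω, τlev i ω ∈ Set.Ioo (0 : ℝ) 1)
    (h_lt : ∀ i, ∀ᵐ ω ∂μ, alev i ω < τlev i ω)
    (hbudget : ∀ᵐ ω ∂μ,
      ∑' i, ENNReal.ofReal (if P i ω ≤ τlev i ω then alev i ω / τlev i ω else 0)
        ≤ ENNReal.ofReal α) :
    (∫⁻ ω, ∑' i : H0, Set.indicator {ω' | P i ω' ≤ alev i ω'} (fun _ => (1 : ℝ≥0∞)) ω ∂μ)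
        ≤ ENNReal.ofReal α ∧
      μ {ω | ∃ i ∈ H0, P i ω ≤ alev i ω} ≤ ENNReal.ofReal α :=
  discard_spending_pfer_control_general μ P hPmeas H0 hconserv hindep α alev τlev halev_meas
    hτlev_meas halev_range hτlev_range h_lt hbudget
end
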